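/- In the fixed run setting, for every i ∈ {1,…,n}: (1) if t ⋈ u ∈ E_i ∪ F_i, then ω(t) = ω(u); (2) if σ(T_{i-1}; E_{i-1}) ⊢eq σμ_i(t ⋈ u), then ω(t) = ω(u); and (3) if σ(U_i; F_i) ⊢eq σθ_i(t ⋈ u), then ω(t) = ω(u). -/
import Mathlib


open scoped Classical

/-! ## Terms -/

inductive Term : Type
  | name : ℕ → Term
  | var  : ℕ → Term
  | pair : Term → Term → Term
  | enc  : Term → Term → Term
deriving DecidableEq

namespace Term

def subterms : Term → Set Term
  | name n => {name n}
  | var x => {var x}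
  | pair a b => insert (pair a b) (subterms a ∪ subterms b)
  | enc a b => insert (enc a b) (subterms a ∪ subterms b)

def tvars : Term → Set ℕ
  | name _ => ∅
  | var x => {x}
  | pair a b => tvars a ∪ tvars b
  | enc a b => tvars a ∪ tvars b

/-- A term is ground if it contains no variables. -/
def ground (t : Term) : Prop := tvars t = ∅

end Term

def sSubterms (X : Set Term) : Set Term := ⋃ t ∈ X, t.subterms
def sVars (X : Set Term) : Set ℕ := ⋃ t ∈ X, t.tvars
def varTerms (V : Set ℕ) : Set Term := Term.var '' V
def pairSubterms (E : Set (Term × Term)) : Set Term :=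
  ⋃ e ∈ E, (Term.subterms e.1 ∪ Term.subterms e.2)

/-! ## Substitutions -/

abbrev Subst := ℕ → Term

namespace Subst

def app (σ : Subst) : Term → Term
  | Term.name n => Term.name n
  | Term.var x => σ x
  | Term.pair a b => Term.pair (app σ a) (app σ b)
  | Term.enc a b => Term.enc (app σ a) (app σ b)

def dom (σ : Subst) : Set ℕ := {x | σ x ≠ Term.var x}

/-- A (totally) ground substitution. -/
def isGround (σ : Subst) : Prop := ∀ x, (σ x).ground

end Subst

def pairImg (σ : Subst) (E : Set (Term × Term)) : Set (Term × Term) :=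
  (fun e => (σ.app e.1, σ.app e.2)) '' E

/-! ## Dolev-Yao derivability.  `inv` gives the inverse of a key. -/

inductive dy (inv : Term → Term) (X : Set Term) : Term → Prop
  | ax {t} : t ∈ X → dy inv X t
  | pair {t u} : dy inv X t → dy inv X u → dy inv X (Term.pair t u)
  | enc {t k} : dy inv X t → dy inv X k → dy inv X (Term.enc t k)
  | fst {t u} : dy inv X (Term.pair t u) → dy inv X t
  | snd {t u} : dy inv X (Term.pair t u) → dy inv X u
  | dec {t k} : dy inv X (Term.enc t k) → dy inv X (inv k) → dy inv X t

/-! ## Positions -/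

def positions : Term → Set (List Bool)
  | Term.pair a b =>
      insert [] ((List.cons false) '' positions a ∪ (List.cons true) '' positions b)
  | Term.enc a b =>
      insert [] ((List.cons false) '' positions a ∪ (List.cons true) '' positions b)
  | _ => {[]}

def subtermAt : Term → List Bool → Option Term
  | t, [] => some t
  | Term.pair a b, i :: p => subtermAt (if i then b else a) p
  | Term.enc a b, i :: p => subtermAt (if i then b else a) p
  | _, _ :: _ => none

/-- Positions of `t` at which the variable `x` occurs. -/
def posof (x : ℕ) (t : Term) : Set (List Bool) := {p | subtermAt t p = some (Term.var x)}

/-- Replace the subterms at every position in `P` by `r`. -/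
noncomputable def replaceAt : Term → Set (List Bool) → Term → Term
  | Term.pair a b, P, r =>
      if [] ∈ P then r
      else Term.pair (replaceAt a {p | false :: p ∈ P} r) (replaceAt b {p | true :: p ∈ P} r)
  | Term.enc a b, P, r =>
      if [] ∈ P then r
      else Term.enc (replaceAt a {p | false :: p ∈ P} r) (replaceAt b {p | true :: p ∈ P} r)
  | t, P, r => if [] ∈ P then r else t

/-- `Qpos t p`: the root position together with all positions `q ++ [i]` of `t`
where `q` is a proper prefix of `p`. -/
def Qpos (t : Term) (p : List Bool) : Set (List Bool) :=
  insert [] {q | q ∈ positions t ∧ ∃ q' i, q = q' ++ [i] ∧ q' <+: p ∧ q' ≠ p}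

/-- Abstractable positions of `t` with respect to `S`. -/
def absPos (inv : Term → Term) (S : Set Term) (t : Term) : Set (List Bool) :=
  {p | p ∈ positions t ∧ ∀ q ∈ Qpos t p, ∀ s, subtermAt t q = some s → dy inv S s}

/-! ## Assertions: `∃ bv. (l ⋈ r)` -/

structure Assertion : Type where
  bv : List ℕ
  l : Term
  r : Term
deriving DecidableEq

namespace Assertion

def bvSet (α : Assertion) : Set ℕ := {x | x ∈ α.bv}
def fv (α : Assertion) : Set ℕ := (α.l.tvars ∪ α.r.tvars) \ α.bvSet
def vars (α : Assertion) : Set ℕ := α.l.tvars ∪ α.r.tvars ∪ α.bvSet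
def subterms (α : Assertion) : Set Term := α.l.subterms ∪ α.r.subterms

end Assertion

def afvSet (A : Set Assertion) : Set ℕ := ⋃ β ∈ A, β.fv
def abvSet (A : Set Assertion) : Set ℕ := ⋃ β ∈ A, β.bvSet
def aVarsSet (A : Set Assertion) : Set ℕ := ⋃ β ∈ A, β.vars
def aSubtermsSet (A : Set Assertion) : Set Term := ⋃ β ∈ A, β.subterms

/-- The public terms of an assertion: maximal subterms containing no quantifiable
variable (`Vq` is the set of quantifiable variables). -/
def pubs (Vq : Set ℕ) (α : Assertion) : Set Term :=
  {t | t ∈ α.subterms ∧ t.tvars ∩ Vq = ∅ ∧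
    ¬ ∃ u ∈ α.subterms, t ≠ u ∧ t ∈ u.subterms ∧ u.tvars ∩ Vq = ∅}

/-- prepend an existential quantifier -/
def exA (x : ℕ) (α : Assertion) : Assertion := ⟨x :: α.bv, α.l, α.r⟩

/-- The `0^k` prefix of term positions of an assertion. -/
def prefixL (α : Assertion) : List Bool := List.replicate α.bv.length false

/-- Positions of an assertion at which the variable `x` occurs. -/
def aPosOf (x : ℕ) (α : Assertion) : Set (List Bool) :=
  (fun p => prefixL α ++ false :: p) '' posof x α.l ∪
  (fun p => prefixL α ++ true :: p) '' posof x α.r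

/-- Replace the subterms at every (assertion) position in `P` by `r`. -/
noncomputable def aReplace (α : Assertion) (P : Set (List Bool)) (r : Term) : Assertion :=
  ⟨α.bv,
   replaceAt α.l {p | (prefixL α ++ false :: p) ∈ P} r,
   replaceAt α.r {p | (prefixL α ++ true :: p) ∈ P} r⟩

/-- Abstractable positions of an assertion with respect to `S`. -/
def aAbs (inv : Term → Term) (S : Set Term) (α : Assertion) : Set (List Bool) :=
  (fun p => prefixL α ++ false :: p) '' absPos inv (S ∪ varTerms α.bvSet) α.l ∪
  (fun p => prefixL α ++ true :: p) '' absPos inv (S ∪ varTerms α.bvSet) α.r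

/-! ## The assertion derivation system ⊢a -/

inductive adrv (inv : Term → Term) : Set Term → Set Assertion → Assertion → Prop
  | ax {S A α} : α ∈ A → adrv inv S A α
  | eq {S A t} : dy inv S t → adrv inv S A ⟨[], t, t⟩
  | sym {S A t u} : adrv inv S A ⟨[], t, u⟩ → adrv inv S A ⟨[], u, t⟩
  | trans {S A t u v} : adrv inv S A ⟨[], t, u⟩ → adrv inv S A ⟨[], u, v⟩ →
      adrv inv S A ⟨[], t, v⟩
  | consPair {S A t0 t1 u0 u1} : adrv inv S A ⟨[], t0, u0⟩ → adrv inv S A ⟨[], t1, u1⟩ →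
      adrv inv S A ⟨[], Term.pair t0 t1, Term.pair u0 u1⟩
  | consEnc {S A t0 t1 u0 u1} : adrv inv S A ⟨[], t0, u0⟩ → adrv inv S A ⟨[], t1, u1⟩ →
      adrv inv S A ⟨[], Term.enc t0 t1, Term.enc u0 u1⟩
  | projPairFst {S A t0 t1 u0 u1} :
      adrv inv S A ⟨[], Term.pair t0 t1, Term.pair u0 u1⟩ →
      dy inv S t0 → dy inv S t1 → dy inv S u0 → dy inv S u1 → adrv inv S A ⟨[], t0, u0⟩
  | projPairSnd {S A t0 t1 u0 u1} :
      adrv inv S A ⟨[], Term.pair t0 t1, Term.pair u0 u1⟩ →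
      dy inv S t0 → dy inv S t1 → dy inv S u0 → dy inv S u1 → adrv inv S A ⟨[], t1, u1⟩
  | projEncFst {S A t0 t1 u0 u1} :
      adrv inv S A ⟨[], Term.enc t0 t1, Term.enc u0 u1⟩ →
      dy inv S t0 → dy inv S t1 → dy inv S u0 → dy inv S u1 → adrv inv S A ⟨[], t0, u0⟩
  | projEncSnd {S A t0 t1 u0 u1} :
      adrv inv S A ⟨[], Term.enc t0 t1, Term.enc u0 u1⟩ →
      dy inv S t0 → dy inv S t1 → dy inv S u0 → dy inv S u1 → adrv inv S A ⟨[], t1, u1⟩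
  | exI {S A α x t} : adrv inv S A (aReplace α (aPosOf x α) t) → dy inv S t →
      aPosOf x α ⊆ aAbs inv (insert (Term.var x) S) α → adrv inv S A (exA x α)
  | exE {S A α x γ} : adrv inv S A (exA x α) →
      adrv inv (insert (Term.var x) S) (insert α A) γ →
      x ∉ sVars S → x ∉ afvSet A → x ∉ γ.fv → adrv inv S A γ

/-- ⊢a without the ∃-elimination rule. -/
inductive adrvNX (inv : Term → Term) : Set Term → Set Assertion → Assertion → Prop
  | ax {S A α} : α ∈ A → adrvNX inv S A α
  | eq {S A t} : dy inv S t → adrvNX inv S A ⟨[], t, t⟩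
  | sym {S A t u} : adrvNX inv S A ⟨[], t, u⟩ → adrvNX inv S A ⟨[], u, t⟩
  | trans {S A t u v} : adrvNX inv S A ⟨[], t, u⟩ → adrvNX inv S A ⟨[], u, v⟩ →
      adrvNX inv S A ⟨[], t, v⟩
  | consPair {S A t0 t1 u0 u1} : adrvNX inv S A ⟨[], t0, u0⟩ → adrvNX inv S A ⟨[], t1, u1⟩ →
      adrvNX inv S A ⟨[], Term.pair t0 t1, Term.pair u0 u1⟩
  | consEnc {S A t0 t1 u0 u1} : adrvNX inv S A ⟨[], t0, u0⟩ → adrvNX inv S A ⟨[], t1, u1⟩ →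
      adrvNX inv S A ⟨[], Term.enc t0 t1, Term.enc u0 u1⟩
  | projPairFst {S A t0 t1 u0 u1} :
      adrvNX inv S A ⟨[], Term.pair t0 t1, Term.pair u0 u1⟩ →
      dy inv S t0 → dy inv S t1 → dy inv S u0 → dy inv S u1 → adrvNX inv S A ⟨[], t0, u0⟩
  | projPairSnd {S A t0 t1 u0 u1} :
      adrvNX inv S A ⟨[], Term.pair t0 t1, Term.pair u0 u1⟩ →
      dy inv S t0 → dy inv S t1 → dy inv S u0 → dy inv S u1 → adrvNX inv S A ⟨[], t1, u1⟩
  | projEncFst {S A t0 t1 u0 u1} :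
      adrvNX inv S A ⟨[], Term.enc t0 t1, Term.enc u0 u1⟩ →
      dy inv S t0 → dy inv S t1 → dy inv S u0 → dy inv S u1 → adrvNX inv S A ⟨[], t0, u0⟩
  | projEncSnd {S A t0 t1 u0 u1} :
      adrvNX inv S A ⟨[], Term.enc t0 t1, Term.enc u0 u1⟩ →
      dy inv S t0 → dy inv S t1 → dy inv S u0 → dy inv S u1 → adrvNX inv S A ⟨[], t1, u1⟩
  | exI {S A α x t} : adrvNX inv S A (aReplace α (aPosOf x α) t) → dy inv S t →
      aPosOf x α ⊆ aAbs inv (insert (Term.var x) S) α → adrvNX inv S A (exA x α)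

/-- The equality fragment ⊢eq : derivability of equalities `t ⋈ u` from a set `T` of
terms and a set `E` of equalities, without the quantifier rules. -/
inductive eqdrv (inv : Term → Term) (T : Set Term) (E : Set (Term × Term)) :
    Term → Term → Prop
  | ax {t u} : (t, u) ∈ E → eqdrv inv T E t u
  | eq {t} : dy inv T t → eqdrv inv T E t t
  | sym {t u} : eqdrv inv T E t u → eqdrv inv T E u t
  | trans {t u v} : eqdrv inv T E t u → eqdrv inv T E u v → eqdrv inv T E t v
  | consPair {t0 t1 u0 u1} : eqdrv inv T E t0 u0 → eqdrv inv T E t1 u1 →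
      eqdrv inv T E (Term.pair t0 t1) (Term.pair u0 u1)
  | consEnc {t0 t1 u0 u1} : eqdrv inv T E t0 u0 → eqdrv inv T E t1 u1 →
      eqdrv inv T E (Term.enc t0 t1) (Term.enc u0 u1)
  | projPairFst {t0 t1 u0 u1} : eqdrv inv T E (Term.pair t0 t1) (Term.pair u0 u1) →
      dy inv T t0 → dy inv T t1 → dy inv T u0 → dy inv T u1 → eqdrv inv T E t0 u0
  | projPairSnd {t0 t1 u0 u1} : eqdrv inv T E (Term.pair t0 t1) (Term.pair u0 u1) →
      dy inv T t0 → dy inv T t1 → dy inv T u0 → dy inv T u1 → eqdrv inv T E t1 u1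
  | projEncFst {t0 t1 u0 u1} : eqdrv inv T E (Term.enc t0 t1) (Term.enc u0 u1) →
      dy inv T t0 → dy inv T t1 → dy inv T u0 → dy inv T u1 → eqdrv inv T E t0 u0
  | projEncSnd {t0 t1 u0 u1} : eqdrv inv T E (Term.enc t0 t1) (Term.enc u0 u1) →
      dy inv T t0 → dy inv T t1 → dy inv T u0 → dy inv T u1 → eqdrv inv T E t1 u1

/-! ## Sanitized pairs, kernels, purity, consistency -/

/-- `(S;A)` is sanitized: free variables avoid `Vq`, bound variables are from `Vq`,
and the public terms of each assertion of `A` belong to `S`. -/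
def sanitized (Vq : Set ℕ) (S : Set Term) (A : Set Assertion) : Prop :=
  ((sVars S ∪ afvSet A) ∩ Vq = ∅) ∧ (∀ β ∈ A, β.bvSet ⊆ Vq) ∧ (∀ β ∈ A, pubs Vq β ⊆ S)

def kerT (S : Set Term) (A : Set Assertion) : Set Term := S ∪ varTerms (abvSet A)
def kerE (A : Set Assertion) : Set (Term × Term) := {e | ∃ β ∈ A, e = (β.l, β.r)}
def kerA (A : Set Assertion) : Set Assertion := {γ | ∃ β ∈ A, γ = Assertion.mk [] β.l β.r}

/-- The set of assertions corresponding to a set of equalities. -/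
def EtoA (E : Set (Term × Term)) : Set Assertion := {γ | ∃ e ∈ E, γ = Assertion.mk [] e.1 e.2}

/-- `(T;E)` is pure if it is the kernel of some sanitized pair. -/
def isPure (Vq : Set ℕ) (T : Set Term) (E : Set (Term × Term)) : Prop :=
  ∃ S A, sanitized Vq S A ∧ T = kerT S A ∧ E = kerE A

/-- `(T;E)` is consistent if some ground substitution unifies every equality in `E`. -/
def consistentE (E : Set (Term × Term)) : Prop :=
  ∃ lam : Subst, lam.isGround ∧ ∀ e ∈ E, lam.app e.1 = lam.app e.2

/-- `M`-bounded substitution: every image has at most `M` distinct subterms. -/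
def boundedSub (M : ℕ) (μ : Subst) : Prop :=
  ∀ x ∈ μ.dom, (Term.subterms (μ x)).ncard ≤ M



/-! ## Dolev-Yao proof trees -/

inductive DPT : Type
  | ax (t : Term)
  | pair (p q : DPT)
  | enc (p q : DPT)
  | fst (p : DPT)
  | snd (p : DPT)
  | dec (p q : DPT)

namespace DPT

/-- The conclusion of a DY proof tree, if it is well-formed. -/
def concl (inv : Term → Term) : DPT → Option Term
  | ax t => some t
  | pair p q =>
      match concl inv p, concl inv q with
      | some a, some b => some (Term.pair a b)
      | _, _ => none
  | enc p q =>
      match concl inv p, concl inv q with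
      | some a, some b => some (Term.enc a b)
      | _, _ => none
  | fst p =>
      match concl inv p with
      | some (Term.pair a _) => some a
      | _ => none
  | snd p =>
      match concl inv p with
      | some (Term.pair _ b) => some b
      | _ => none
  | dec p q =>
      match concl inv p, concl inv q with
      | some (Term.enc a k), some k' => if k' = inv k then some a else none
      | _, _ => none

/-- Validity of a DY proof tree from the set `X`. -/
def valid (inv : Term → Term) (X : Set Term) : DPT → Prop
  | ax t => t ∈ X
  | pair p q => valid inv X p ∧ valid inv X q
  | enc p q => valid inv X p ∧ valid inv X q
  | fst p => valid inv X p ∧ ∃ a b, concl inv p = some (Term.pair a b)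
  | snd p => valid inv X p ∧ ∃ a b, concl inv p = some (Term.pair a b)
  | dec p q => valid inv X p ∧ valid inv X q ∧
      ∃ a k, concl inv p = some (Term.enc a k) ∧ concl inv q = some (inv k)

def endsConstructor : DPT → Prop
  | pair _ _ => True
  | enc _ _ => True
  | _ => False

def endsDestructor : DPT → Prop
  | fst _ => True
  | snd _ => True
  | dec _ _ => True
  | _ => False

/-- Normal DY proofs: no constructor conclusion is the major premise of a destructor. -/
def normal : DPT → Prop
  | ax _ => True
  | pair p q => normal p ∧ normal q
  | enc p q => normal p ∧ normal q
  | fst p => normal p ∧ ¬ endsConstructor p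
  | snd p => normal p ∧ ¬ endsConstructor p
  | dec p q => normal p ∧ normal q ∧ ¬ endsConstructor p

/-- All terms occurring in a DY proof tree (conclusions of subproofs). -/
def termSet (inv : Term → Term) : DPT → Set Term
  | ax t => {t}
  | pair p q => {a | concl inv (pair p q) = some a} ∪ termSet inv p ∪ termSet inv q
  | enc p q => {a | concl inv (enc p q) = some a} ∪ termSet inv p ∪ termSet inv q
  | fst p => {a | concl inv (fst p) = some a} ∪ termSet inv p
  | snd p => {a | concl inv (snd p) = some a} ∪ termSet inv p
  | dec p q => {a | concl inv (dec p q) = some a} ∪ termSet inv p ∪ termSet inv q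

/-- Typed DY proof w.r.t. a set `G`: every subproof ends in a constructor rule or
has its conclusion in `G`. -/
def typed (inv : Term → Term) (G : Set Term) : DPT → Prop
  | ax t => t ∈ G
  | pair p q => typed inv G p ∧ typed inv G q
  | enc p q => typed inv G p ∧ typed inv G q
  | fst p => typed inv G p ∧ ∀ a, concl inv (fst p) = some a → a ∈ G
  | snd p => typed inv G p ∧ ∀ a, concl inv (snd p) = some a → a ∈ G
  | dec p q => typed inv G p ∧ typed inv G q ∧ ∀ a, concl inv (dec p q) = some a → a ∈ G

end DPT

/-! ## Equality proof trees (the system ⊢eq), with n-ary trans -/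

inductive EPT : Type
  | ax (t u : Term)
  | eq (t : Term) (d : DPT)
  | sym (t u : Term) (p : EPT)
  | trans (t u : Term) (ps : List EPT)
  | consPair (t0 u0 t1 u1 : Term) (p q : EPT)
  | consEnc (t0 u0 t1 u1 : Term) (p q : EPT)
  | projPairFst (t0 t1 u0 u1 : Term) (p : EPT)
  | projPairSnd (t0 t1 u0 u1 : Term) (p : EPT)
  | projEncFst (t0 t1 u0 u1 : Term) (p : EPT)
  | projEncSnd (t0 t1 u0 u1 : Term) (p : EPT)

namespace EPT

/-- The conclusion `t ⋈ u` of an equality proof tree. -/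
def concl : EPT → Term × Term
  | ax t u => (t, u)
  | eq t _ => (t, t)
  | sym t u _ => (t, u)
  | trans t u _ => (t, u)
  | consPair t0 u0 t1 u1 _ _ => (Term.pair t0 t1, Term.pair u0 u1)
  | consEnc t0 u0 t1 u1 _ _ => (Term.enc t0 t1, Term.enc u0 u1)
  | projPairFst t0 _ u0 _ _ => (t0, u0)
  | projPairSnd _ t1 _ u1 _ => (t1, u1)
  | projEncFst t0 _ u0 _ _ => (t0, u0)
  | projEncSnd _ t1 _ u1 _ => (t1, u1)

/-- Immediate subproof relation. -/
inductive Sub : EPT → EPT → Prop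
  | sym {t u p} : Sub p (EPT.sym t u p)
  | trans {t u ps p} : p ∈ ps → Sub p (EPT.trans t u ps)
  | consPairL {t0 u0 t1 u1 p q} : Sub p (EPT.consPair t0 u0 t1 u1 p q)
  | consPairR {t0 u0 t1 u1 p q} : Sub q (EPT.consPair t0 u0 t1 u1 p q)
  | consEncL {t0 u0 t1 u1 p q} : Sub p (EPT.consEnc t0 u0 t1 u1 p q)
  | consEncR {t0 u0 t1 u1 p q} : Sub q (EPT.consEnc t0 u0 t1 u1 p q)
  | projPairFst {t0 t1 u0 u1 p} : Sub p (EPT.projPairFst t0 t1 u0 u1 p)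
  | projPairSnd {t0 t1 u0 u1 p} : Sub p (EPT.projPairSnd t0 t1 u0 u1 p)
  | projEncFst {t0 t1 u0 u1 p} : Sub p (EPT.projEncFst t0 t1 u0 u1 p)
  | projEncSnd {t0 t1 u0 u1 p} : Sub p (EPT.projEncSnd t0 t1 u0 u1 p)

/-- `Subproof p q`: `p` is a (not necessarily proper) subproof of `q`. -/
def Subproof : EPT → EPT → Prop := Relation.ReflTransGen Sub

def isAx : EPT → Prop
  | ax _ _ => True
  | _ => False

def isTrans : EPT → Prop
  | trans _ _ _ => True
  | _ => False

def isCons : EPT → Prop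
  | consPair _ _ _ _ _ _ => True
  | consEnc _ _ _ _ _ _ => True
  | _ => False

def isProj : EPT → Prop
  | projPairFst _ _ _ _ _ => True
  | projPairSnd _ _ _ _ _ => True
  | projEncFst _ _ _ _ _ => True
  | projEncSnd _ _ _ _ _ => True
  | _ => False

/-- The ⊢eq proof contains an occurrence of the cons rule. -/
def containsCons (π : EPT) : Prop := ∃ π', Subproof π' π ∧ isCons π'

/-- Local validity of the last rule of an equality proof tree. -/
def localValid (inv : Term → Term) (T : Set Term) (E : Set (Term × Term)) : EPT → Prop
  | ax t u => (t, u) ∈ E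
  | eq t d => DPT.valid inv T d ∧ DPT.concl inv d = some t
  | sym t u p => concl p = (u, t)
  | trans t u ps =>
      ps ≠ [] ∧ (ps.head?.map fun p => (concl p).1) = some t ∧
      (ps.getLast?.map fun p => (concl p).2) = some u ∧
      List.Chain' (fun p q => (concl p).2 = (concl q).1) ps
  | consPair t0 u0 t1 u1 p q => concl p = (t0, u0) ∧ concl q = (t1, u1)
  | consEnc t0 u0 t1 u1 p q => concl p = (t0, u0) ∧ concl q = (t1, u1)
  | projPairFst t0 t1 u0 u1 p => concl p = (Term.pair t0 t1, Term.pair u0 u1) ∧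
      dy inv T t0 ∧ dy inv T t1 ∧ dy inv T u0 ∧ dy inv T u1
  | projPairSnd t0 t1 u0 u1 p => concl p = (Term.pair t0 t1, Term.pair u0 u1) ∧
      dy inv T t0 ∧ dy inv T t1 ∧ dy inv T u0 ∧ dy inv T u1
  | projEncFst t0 t1 u0 u1 p => concl p = (Term.enc t0 t1, Term.enc u0 u1) ∧
      dy inv T t0 ∧ dy inv T t1 ∧ dy inv T u0 ∧ dy inv T u1
  | projEncSnd t0 t1 u0 u1 p => concl p = (Term.enc t0 t1, Term.enc u0 u1) ∧
      dy inv T t0 ∧ dy inv T t1 ∧ dy inv T u0 ∧ dy inv T u1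

/-- Validity of an equality proof tree from `(T;E)`. -/
def valid (inv : Term → Term) (T : Set Term) (E : Set (Term × Term)) (π : EPT) : Prop :=
  ∀ π', Subproof π' π → localValid inv T E π'

/-- Local normality conditions for the last rule. -/
def localNormal : EPT → Prop
  | ax _ _ => True
  | eq _ d => DPT.normal d ∧ DPT.endsDestructor d
  | sym _ _ p => isAx p
  | trans _ _ ps =>
      (∀ p ∈ ps, ¬ isTrans p ∧ (concl p).1 ≠ (concl p).2) ∧
      List.Chain' (fun p q => ¬ (isCons p ∧ isCons q)) ps
  | consPair _ _ _ _ _ _ => True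
  | consEnc _ _ _ _ _ _ => True
  | projPairFst _ _ _ _ p => ¬ containsCons p
  | projPairSnd _ _ _ _ p => ¬ containsCons p
  | projEncFst _ _ _ _ p => ¬ containsCons p
  | projEncSnd _ _ _ _ p => ¬ containsCons p

/-- A normal ⊢eq proof. -/
def normalP (π : EPT) : Prop := ∀ π', Subproof π' π → localNormal π'

/-- The DY subproof attached to an `eq` node, if any. -/
def dSub : EPT → Option DPT
  | eq _ d => some d
  | _ => none

/-- All terms occurring in an ⊢eq proof: the terms of the conclusions of all
subproofs, including the DY subproofs. -/
def termSet (inv : Term → Term) (π : EPT) : Set Term :=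
  {a | ∃ π', Subproof π' π ∧
    (a = (concl π').1 ∨ a = (concl π').2 ∨
      ∃ d, dSub π' = some d ∧ a ∈ DPT.termSet inv d)}

/-- Typed ⊢eq proof w.r.t. a set `Typ` of typed terms: every subproof contains
cons, or proves a trivial equality, or has typed conclusion terms. -/
def typedP (Typ : Set Term) (π : EPT) : Prop :=
  ∀ π', Subproof π' π →
    containsCons π' ∨ (concl π').1 = (concl π').2 ∨
      ((concl π').1 ∈ Typ ∧ (concl π').2 ∈ Typ)

end EPT



/-! ## The fixed run setting -/

/-- A fixed run of a protocol: at step `i` (for `1 ≤ i ≤ n`) the honest agent `uᵢ`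
receives the assertion `β i` from the intruder and sends the assertion `α i`;
`(T i; E i)` and `(U i; F i)` are the kernels of the knowledge states of the
intruder and of `uᵢ`; `σ` is the ground substitution of the run, `μ i`/`θ i` the
witness substitutions, `ω` their composition, and `m` the spare name. -/
structure RunSetting : Type where
  inv : Term → Term
  Vq : Set ℕ
  n : ℕ
  β : ℕ → Assertion
  α : ℕ → Assertion
  T : ℕ → Set Term
  E : ℕ → Set (Term × Term)
  U : ℕ → Set Term
  F : ℕ → Set (Term × Term)
  σ : Subst
  μ : ℕ → Subst
  θ : ℕ → Subst
  ω : Subst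
  m : ℕ
  -- well-formedness of the communicated assertions
  hβbv : ∀ i, 1 ≤ i → i ≤ n → (β i).bvSet ⊆ Vq
  hαbv : ∀ i, 1 ≤ i → i ≤ n → (α i).bvSet ⊆ Vq
  hβfv : ∀ i, 1 ≤ i → i ≤ n → (β i).fv ∩ Vq = ∅
  hαfv : ∀ i, 1 ≤ i → i ≤ n → (α i).fv ∩ Vq = ∅
  -- σ is ground, defined on the intruder variables of the run, and fixes Vq
  hσVq : ∀ x ∈ Vq, σ x = Term.var x
  hσground : ∀ x ∈ σ.dom, (σ x).ground
  -- evolution of the kernels of the intruder's knowledge state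
  hT0 : ∀ t ∈ T 0, t.ground
  hE0 : E 0 = ∅
  hTmono : ∀ i, T i ⊆ T (i + 1)
  hEmono : ∀ i, E i ⊆ E (i + 1)
  hTstep : ∀ i, 1 ≤ i → i ≤ n →
    T i = T (i - 1) ∪ pubs Vq (α i) ∪ varTerms (α i).bvSet
  hEstep : ∀ i, 1 ≤ i → i ≤ n → E i = E (i - 1) ∪ {((α i).l, (α i).r)}
  -- knowledge states are finite
  hTfin : ∀ i, i ≤ n → (T i).Finite
  hEfin : ∀ i, i ≤ n → (E i).Finite
  hUfin : ∀ i, i ≤ n → (U i).Finite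
  hFfin : ∀ i, i ≤ n → (F i).Finite
  -- provenance of honest agents' kernels
  hUmem : ∀ i, 1 ≤ i → i ≤ n → ∀ t ∈ U i,
    (∃ x ∈ Vq, t = Term.var x) ∨ t.tvars ⊆ σ.dom
  hFmem : ∀ i, 1 ≤ i → i ≤ n → ∀ e ∈ F i,
    ∃ j, 1 ≤ j ∧ j ≤ i ∧ e = ((β j).l, (β j).r)
  -- variables sent by honest agents were received earlier (Observation 2 of the paper)
  hfvEarlier : ∀ i, 1 ≤ i → i ≤ n → ∀ x ∈ (α i).fv,
    ∃ j, 1 ≤ j ∧ j ≤ i ∧ x ∈ (β j).fv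
  -- witness substitutions and the derivability conditions of the run
  hμdom : ∀ i, 1 ≤ i → i ≤ n → (μ i).dom ⊆ (β i).bvSet
  hθdom : ∀ i, 1 ≤ i → i ≤ n → (θ i).dom ⊆ (α i).bvSet
  hμdy : ∀ i, 1 ≤ i → i ≤ n → ∀ x ∈ (μ i).dom,
    dy inv (Subst.app σ '' T (i - 1)) (μ i x)
  hμeq : ∀ i, 1 ≤ i → i ≤ n →
    eqdrv inv (Subst.app σ '' T (i - 1)) (pairImg σ (E (i - 1)))
      (σ.app ((μ i).app (β i).l)) (σ.app ((μ i).app (β i).r))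
  hθdy : ∀ i, 1 ≤ i → i ≤ n → ∀ x ∈ (θ i).dom,
    dy inv (Subst.app σ '' U i) (θ i x)
  hθeq : ∀ i, 1 ≤ i → i ≤ n →
    eqdrv inv (Subst.app σ '' U i) (pairImg σ (F i))
      (σ.app ((θ i).app (α i).l)) (σ.app ((θ i).app (α i).r))
  -- ω is the composition σμ₁θ₁…μₙθₙ
  hωσ : ∀ x, ω.app (σ x) = ω x
  hωμ : ∀ i, 1 ≤ i → i ≤ n → ∀ x, ω.app ((μ i) x) = ω x
  hωθ : ∀ i, 1 ≤ i → i ≤ n → ∀ x, ω.app ((θ i) x) = ω x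
  hωground : ∀ x ∈ ω.dom, (ω x).ground
  hωT : ∀ i, i ≤ n → ∀ t ∈ T i ∪ U i, (ω.app t).ground
  hωE : ∀ i, i ≤ n → ∀ e ∈ E i ∪ F i, (ω.app e.1).ground ∧ (ω.app e.2).ground
  -- the spare name m
  hm : Term.name m ∈ T 0
  hmβ : ∀ i, 1 ≤ i → i ≤ n →
    Term.name m ∉ (β i).subterms ∪ (α i).subterms
  hmμ : ∀ i, 1 ≤ i → i ≤ n → ∀ x ∈ (μ i).dom, Term.name m ∉ (μ i x).subterms
  hmθ : ∀ i, 1 ≤ i → i ≤ n → ∀ x ∈ (θ i).dom, Term.name m ∉ (θ i x).subterms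

namespace RunSetting

variable (R : RunSetting)

/-- The public terms of the `i`-th intruder send. -/
def IT (i : ℕ) : Set Term := pubs R.Vq (R.β i)

/-- The public terms of the `i`-th honest agent send. -/
def HT (i : ℕ) : Set Term := pubs R.Vq (R.α i)

/-- The type set 𝒞 of the run. -/
def C : Set Term :=
  ⋃ i ∈ Set.Iic R.n, (sSubterms (R.T i ∪ R.U i) ∪ pairSubterms (R.E i ∪ R.F i))

/-- The type set 𝒟 = 𝒞 ∖ 𝒱 of the run. -/
def D : Set Term := R.C \ Set.range Term.var

/-- A variable is minimal if its ω-image coincides with the ω-image of no term of 𝒟. -/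
def minimal (x : ℕ) : Prop := x ∈ R.ω.dom ∧ ¬ ∃ t ∈ R.D, R.ω.app t = R.ω x

/-- A term is zappable if it ω-unifies with some minimal variable. -/
def zappable (t : Term) : Prop := ∃ x, R.minimal x ∧ R.ω.app t = R.ω x

/-- The zap of a term: zappable terms get replaced by the spare name `m`. -/
noncomputable def zap : Term → Term
  | Term.var x => Term.var x
  | Term.name k => if R.zappable (Term.name k) then Term.name R.m else Term.name k
  | Term.pair a b =>
      if R.zappable (Term.pair a b) then Term.name R.m
      else Term.pair (zap a) (zap b)
  | Term.enc a b =>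
      if R.zappable (Term.enc a b) then Term.name R.m
      else Term.enc (zap a) (zap b)

/-- The small substitution λ* corresponding to λ. -/
noncomputable def star (lam : Subst) : Subst := fun x => R.zap (lam x)

/-- The set of typed terms: σ(𝒟) ∪ ω(𝒞) ∪ 𝒱_q. -/
def typedSet : Set Term :=
  Subst.app R.σ '' R.D ∪ Subst.app R.ω '' R.C ∪ varTerms R.Vq

/-- A typed term. -/
def typedTerm (t : Term) : Prop := t ∈ R.typedSet

end RunSetting



/-! ### Auxiliary lemmas for stmt10 -/

lemma app_comp_eq (ω lam : Subst) (h : ∀ x, ω.app (lam x) = ω x) :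
    ∀ t, ω.app (lam.app t) = ω.app t := by
  intro t
  induction t with
  | name n => rfl
  | var x => exact h x
  | pair a b iha ihb => simp [Subst.app, iha, ihb]
  | enc a b iha ihb => simp [Subst.app, iha, ihb]

lemma eqdrv_sound {inv : Term → Term} {T : Set Term} {E : Set (Term × Term)}
    (ω : Subst) (hE : ∀ e ∈ E, ω.app e.1 = ω.app e.2) :
    ∀ {a b : Term}, eqdrv inv T E a b → ω.app a = ω.app b := by
  intro a b h
  induction h with
  | ax h => exact hE _ h
  | eq _ => rfl
  | sym _ ih => exact ih.symm
  | trans _ _ ih1 ih2 => exact ih1.trans ih2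
  | consPair _ _ ih1 ih2 => simp [Subst.app, ih1, ih2]
  | consEnc _ _ ih1 ih2 => simp [Subst.app, ih1, ih2]
  | projPairFst _ _ _ _ _ ih => simp [Subst.app] at ih; exact ih.1
  | projPairSnd _ _ _ _ _ ih => simp [Subst.app] at ih; exact ih.2
  | projEncFst _ _ _ _ _ ih => simp [Subst.app] at ih; exact ih.1
  | projEncSnd _ _ _ _ _ ih => simp [Subst.app] at ih; exact ih.2

namespace RunSetting

variable (R : RunSetting)

lemma ωσ_app (t : Term) : R.ω.app (R.σ.app t) = R.ω.app t :=
  app_comp_eq R.ω R.σ R.hωσ t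

lemma ωμ_app (i : ℕ) (h1 : 1 ≤ i) (h2 : i ≤ R.n) (t : Term) :
    R.ω.app ((R.μ i).app t) = R.ω.app t :=
  app_comp_eq R.ω (R.μ i) (R.hωμ i h1 h2) t

lemma ωθ_app (i : ℕ) (h1 : 1 ≤ i) (h2 : i ≤ R.n) (t : Term) :
    R.ω.app ((R.θ i).app t) = R.ω.app t :=
  app_comp_eq R.ω (R.θ i) (R.hωθ i h1 h2) t

/-- Truth of the equalities in `E i` under ω. -/
lemma Etrue : ∀ i, i ≤ R.n → ∀ e ∈ R.E i, R.ω.app e.1 = R.ω.app e.2 := by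
  intro i
  induction i using Nat.strong_induction_on with
  | _ i ih =>
    intro hin e he
    rcases Nat.eq_zero_or_pos i with h0 | h1
    · subst h0; rw [R.hE0] at he; exact he.elim
    · rw [R.hEstep i h1 hin] at he
      -- truth of E (j-1) axioms under ω, for j ≤ i
      have hEax : ∀ j, 1 ≤ j → j ≤ i →
          ∀ e' ∈ pairImg R.σ (R.E (j - 1)), R.ω.app e'.1 = R.ω.app e'.2 := by
        intro j hj1 hj2 e' he'
        rcases he' with ⟨f, hf, rfl⟩
        have := ih (j - 1) (by omega) (by omega) f hf
        simpa [R.ωσ_app] using this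
      -- truth of β j equalities under ω, for j ≤ i
      have hβtrue : ∀ j, 1 ≤ j → j ≤ i →
          R.ω.app (R.β j).l = R.ω.app (R.β j).r := by
        intro j hj1 hj2
        have h := eqdrv_sound R.ω (hEax j hj1 hj2) (R.hμeq j hj1 (by omega))
        rwa [R.ωσ_app, R.ωσ_app, R.ωμ_app j hj1 (by omega),
          R.ωμ_app j hj1 (by omega)] at h
      rcases he with he | he
      · exact ih (i - 1) (by omega) (by omega) e he
      · -- e = ((α i).l, (α i).r)
        have hFax : ∀ e' ∈ pairImg R.σ (R.F i), R.ω.app e'.1 = R.ω.app e'.2 := by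
          intro e' he'
          rcases he' with ⟨f, hf, rfl⟩
          obtain ⟨j, hj1, hj2, rfl⟩ := R.hFmem i h1 hin f hf
          simpa [R.ωσ_app] using hβtrue j hj1 hj2
        have h := eqdrv_sound R.ω hFax (R.hθeq i h1 hin)
        rw [R.ωσ_app, R.ωσ_app, R.ωθ_app i h1 hin, R.ωθ_app i h1 hin] at h
        simp only [Set.mem_singleton_iff] at he
        subst he
        exact h

lemma βtrue (j : ℕ) (hj1 : 1 ≤ j) (hj2 : j ≤ R.n) :
    R.ω.app (R.β j).l = R.ω.app (R.β j).r := by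
  have hEax : ∀ e' ∈ pairImg R.σ (R.E (j - 1)), R.ω.app e'.1 = R.ω.app e'.2 := by
    intro e' he'
    rcases he' with ⟨f, hf, rfl⟩
    simpa [R.ωσ_app] using R.Etrue (j - 1) (by omega) f hf
  have h := eqdrv_sound R.ω hEax (R.hμeq j hj1 hj2)
  rwa [R.ωσ_app, R.ωσ_app, R.ωμ_app j hj1 hj2, R.ωμ_app j hj1 hj2] at h

lemma Ftrue (i : ℕ) (h1 : 1 ≤ i) (h2 : i ≤ R.n) :
    ∀ e ∈ R.F i, R.ω.app e.1 = R.ω.app e.2 := by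
  intro e he
  obtain ⟨j, hj1, hj2, rfl⟩ := R.hFmem i h1 h2 e he
  exact R.βtrue j hj1 (by omega)

end RunSetting


/-- Lemma (prooftotruth). -/
theorem stmt10 (R : RunSetting) (i : ℕ) (h1 : 1 ≤ i) (h2 : i ≤ R.n) :
    (∀ t u : Term, (t, u) ∈ R.E i ∪ R.F i → R.ω.app t = R.ω.app u) ∧
    (∀ t u : Term,
      eqdrv R.inv (Subst.app R.σ '' R.T (i - 1)) (pairImg R.σ (R.E (i - 1)))
        (R.σ.app ((R.μ i).app t)) (R.σ.app ((R.μ i).app u)) →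
      R.ω.app t = R.ω.app u) ∧
    (∀ t u : Term,
      eqdrv R.inv (Subst.app R.σ '' R.U i) (pairImg R.σ (R.F i))
        (R.σ.app ((R.θ i).app t)) (R.σ.app ((R.θ i).app u)) →
      R.ω.app t = R.ω.app u) := by
  refine ⟨?_, ?_, ?_⟩
  · intro t u htu
    rcases htu with h | h
    · exact R.Etrue i h2 (t, u) h
    · exact R.Ftrue i h1 h2 (t, u) h
  · intro t u hd
    have hEax : ∀ e' ∈ pairImg R.σ (R.E (i - 1)), R.ω.app e'.1 = R.ω.app e'.2 := by
      intro e' he'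
      rcases he' with ⟨f, hf, rfl⟩
      simpa [R.ωσ_app] using R.Etrue (i - 1) (by omega) f hf
    have h := eqdrv_sound R.ω hEax hd
    rwa [R.ωσ_app, R.ωσ_app, R.ωμ_app i h1 h2, R.ωμ_app i h1 h2] at h
  · intro t u hd
    have hFax : ∀ e' ∈ pairImg R.σ (R.F i), R.ω.app e'.1 = R.ω.app e'.2 := by
      intro e' he'
      rcases he' with ⟨f, hf, rfl⟩
      simpa [R.ωσ_app] using R.Ftrue i h1 h2 f hf
    have h := eqdrv_sound R.ω hFax hd
    rwa [R.ωσ_app, R.ωσ_app, R.ωθ_app i h1 h2, R.ωθ_app i h1 h2] at h
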